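/- Let V be a normed space with the property that for all v,w ∈ V, ‖(v+w)/2‖² ≥ (1/2)‖v‖² + (1/2)‖w‖² − (S²/4)‖v−w‖² (2-uniform smoothness with constant S). Then V has Enflo type 2 with constant S: for every N and (v_ε)_{ε∈{−1,1}^N} ⊂ V, Σ_ε ‖v_ε − v_{−ε}‖² ≤ S² Σ_{ε∼ε'} ‖v_ε − v_{ε'}‖², where ε∼ε' means differing in exactly one coordinate. -/

import Mathlib

/-!
Smoothness applied to `a + b` and `a - b` gives `‖a + b‖² + ‖a - b‖² ≤ 2‖a‖² + 2S²‖b‖²`; with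
`a = ((w - z) + (x - y))/2` and `b = ((w - x) + (z - y))/2` this becomes the four-point inequality
`‖w - y‖² + ‖x - z‖² ≤ S² (‖w - x‖² + ‖y - z‖²) + ‖w - z‖² + ‖x - y‖²`.
Split `{-1,1}^(N+1)` by its first coordinate into two copies of `{-1,1}^N`. The two main
diagonals `w y`, `x z` of the big cube through a pair of first-direction edges `w x`, `y z` close
up a quadrilateral with the main diagonals `w z`, `x y` of the two copies. Summing the four-point
inequality over these quadrilaterals and bounding the diagonal sums of the copies by induction
gives the claim, in any metric space satisfying the four-point inequality.
-/

open Finset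

/-- Two vertices of the discrete cube `{−1,1}^N` (modelled as `Fin N → Bool`) are adjacent
if they differ in exactly one coordinate. -/
def Adjacent {N : ℕ} (ε ε' : Fin N → Bool) : Prop :=
  (Finset.univ.filter fun i => ε i ≠ ε' i).card = 1

instance {N : ℕ} (ε ε' : Fin N → Bool) : Decidable (Adjacent ε ε') := by
  unfold Adjacent; infer_instance

section FourPoint

variable {V : Type*} [SeminormedAddCommGroup V] [NormedSpace ℝ V] {S : ℝ}

lemma norm_add_sq_add_norm_sub_sq_le
    (hsmooth : ∀ v w : V, ‖(1/2 : ℝ) • (v + w)‖ ^ 2 ≥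
      (1/2) * ‖v‖ ^ 2 + (1/2) * ‖w‖ ^ 2 - S ^ 2 / 4 * ‖v - w‖ ^ 2) (a b : V) :
    ‖a + b‖ ^ 2 + ‖a - b‖ ^ 2 ≤ 2 * ‖a‖ ^ 2 + 2 * S ^ 2 * ‖b‖ ^ 2 := by
  have h := hsmooth (a + b) (a - b)
  rw [show (1/2 : ℝ) • ((a + b) + (a - b)) = a by module,
    show (a + b) - (a - b) = (2 : ℝ) • b by module, norm_smul, Real.norm_ofNat] at h
  linarith

lemma norm_half_smul_add_sq_le (p q : V) :
    2 * ‖(1/2 : ℝ) • (p + q)‖ ^ 2 ≤ ‖p‖ ^ 2 + ‖q‖ ^ 2 := by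
  rw [norm_smul, mul_pow, Real.norm_eq_abs, abs_of_pos (by norm_num)]
  nlinarith [add_sq_le (a := ‖p‖) (b := ‖q‖), norm_add_le p q, norm_nonneg (p + q)]

lemma dist_sq_add_dist_sq_le_of_norm_add_sq_add_norm_sub_sq_le
    (hpar : ∀ a b : V, ‖a + b‖ ^ 2 + ‖a - b‖ ^ 2 ≤ 2 * ‖a‖ ^ 2 + 2 * S ^ 2 * ‖b‖ ^ 2)
    (w x y z : V) :
    dist w y ^ 2 + dist x z ^ 2 ≤
      S ^ 2 * (dist w x ^ 2 + dist y z ^ 2) + dist w z ^ 2 + dist x y ^ 2 := by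
  set a : V := (1/2 : ℝ) • ((w - z) + (x - y))
  set b : V := (1/2 : ℝ) • ((w - x) + (z - y))
  have hsum : a + b = w - y := by module
  have hdiff : a - b = x - z := by module
  have key := hpar a b
  rw [hsum, hdiff] at key
  have ha := norm_half_smul_add_sq_le (w - z) (x - y)
  have hb := norm_half_smul_add_sq_le (w - x) (z - y)
  rw [norm_sub_rev z y] at hb
  simp only [dist_eq_norm]
  nlinarith [mul_le_mul_of_nonneg_left hb (sq_nonneg S)]

end FourPoint

section Cube

variable {N : ℕ}

lemma sum_cube_succ {M : Type*} [AddCommMonoid M] (F : (Fin (N + 1) → Bool) → M) :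
    ∑ ε, F ε =
      ∑ δ : Fin N → Bool, F (Fin.cons true δ) + ∑ δ : Fin N → Bool, F (Fin.cons false δ) := by
  rw [← (Fin.consEquiv fun _ => Bool).sum_comp, Fintype.sum_prod_type, Fintype.sum_bool]
  rfl

lemma sum_cube_not {M : Type*} [AddCommMonoid M] (F : (Fin N → Bool) → M) :
    ∑ δ : Fin N → Bool, F (fun i => !(δ i)) = ∑ δ, F δ :=
  (Equiv.piCongrRight fun _ => Equiv.boolNot).sum_comp F

lemma cube_not_cons (a : Bool) (δ : Fin N → Bool) :
    (fun i => !((Fin.cons a δ : Fin (N + 1) → Bool) i)) = Fin.cons (!a) (fun i => !(δ i)) := by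
  funext i
  refine Fin.cases ?_ ?_ i <;> simp

lemma adjacent_cons_iff (a a' : Bool) (δ δ' : Fin N → Bool) :
    Adjacent (Fin.cons a δ : Fin (N + 1) → Bool) (Fin.cons a' δ') ↔
      (a = a' ∧ Adjacent δ δ') ∨ (a ≠ a' ∧ δ = δ') := by
  have hcard : (univ.filter fun i => (Fin.cons a δ : Fin (N + 1) → Bool) i ≠
        (Fin.cons a' δ' : Fin (N + 1) → Bool) i).card =
      (if a = a' then 0 else 1) + (univ.filter fun i => δ i ≠ δ' i).card := by
    rw [card_filter, card_filter, Fin.sum_univ_succ]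
    simp [ite_not]
  unfold Adjacent
  rw [hcard]
  by_cases h : a = a'
  · simp [h]
  · simp [h, card_eq_zero, filter_eq_empty_iff, funext_iff]

end Cube

section EnfloType

variable {X : Type*} [PseudoMetricSpace X] {N : ℕ}

def diagonalSum (f : (Fin N → Bool) → X) : ℝ :=
  ∑ ε, dist (f ε) (f fun i => !(ε i)) ^ 2

def edgeSum (f : (Fin N → Bool) → X) : ℝ :=
  ∑ ε, ∑ ε', if Adjacent ε ε' then dist (f ε) (f ε') ^ 2 else 0

lemma diagonalSum_succ (f : (Fin (N + 1) → Bool) → X) :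
    diagonalSum f = ∑ δ : Fin N → Bool,
      (dist (f (Fin.cons true δ)) (f (Fin.cons false fun i => !(δ i))) ^ 2 +
        dist (f (Fin.cons false δ)) (f (Fin.cons true fun i => !(δ i))) ^ 2) := by
  rw [diagonalSum, sum_cube_succ, ← sum_add_distrib]
  simp only [cube_not_cons, Bool.not_true, Bool.not_false]

lemma sum_adjacent_cons (f : (Fin (N + 1) → Bool) → X) (a : Bool) (δ : Fin N → Bool) :
    (∑ ε', if Adjacent (Fin.cons a δ) ε' then dist (f (Fin.cons a δ)) (f ε') ^ 2 else 0) =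
      (∑ δ', if Adjacent δ δ' then dist (f (Fin.cons a δ)) (f (Fin.cons a δ')) ^ 2 else 0) +
        dist (f (Fin.cons a δ)) (f (Fin.cons (!a) δ)) ^ 2 := by
  rw [sum_cube_succ]
  cases a <;> simp [adjacent_cons_iff, add_comm]

lemma edgeSum_succ (f : (Fin (N + 1) → Bool) → X) :
    edgeSum f =
      edgeSum (fun δ => f (Fin.cons true δ)) + edgeSum (fun δ => f (Fin.cons false δ)) +
        2 * ∑ δ : Fin N → Bool, dist (f (Fin.cons true δ)) (f (Fin.cons false δ)) ^ 2 := by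
  simp only [edgeSum, sum_cube_succ (fun ε => ∑ ε', _), sum_adjacent_cons, sum_add_distrib,
    Bool.not_true, Bool.not_false]
  simp only [dist_comm (f (Fin.cons false _)) (f (Fin.cons true _))]
  ring

theorem diagonalSum_le_edgeSum {S : ℝ}
    (h4 : ∀ w x y z : X, dist w y ^ 2 + dist x z ^ 2 ≤
      S ^ 2 * (dist w x ^ 2 + dist y z ^ 2) + dist w z ^ 2 + dist x y ^ 2) :
    ∀ {N : ℕ} (f : (Fin N → Bool) → X), diagonalSum f ≤ S ^ 2 * edgeSum f
  | 0, f => by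
    have hnot (ε : Fin 0 → Bool) : (fun i => !(ε i)) = ε := Subsingleton.elim _ _
    simp [diagonalSum, edgeSum, hnot]
  | N + 1, f => by
    let g : (Fin N → Bool) → X := fun δ => f (Fin.cons true δ)
    let h : (Fin N → Bool) → X := fun δ => f (Fin.cons false δ)
    have hquad : diagonalSum f ≤ ∑ δ : Fin N → Bool,
        (S ^ 2 * (dist (g δ) (h δ) ^ 2 + dist (h fun i => !(δ i)) (g fun i => !(δ i)) ^ 2) +
          dist (g δ) (g fun i => !(δ i)) ^ 2 + dist (h δ) (h fun i => !(δ i)) ^ 2) :=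
      (diagonalSum_succ f).trans_le (sum_le_sum fun δ _ => h4 _ _ _ _)
    have hflip : ∑ δ : Fin N → Bool, dist (h fun i => !(δ i)) (g fun i => !(δ i)) ^ 2 =
        ∑ δ, dist (g δ) (h δ) ^ 2 := by
      rw [sum_cube_not fun δ => dist (h δ) (g δ) ^ 2]
      simp only [dist_comm]
    simp only [sum_add_distrib, ← mul_sum, hflip] at hquad
    have hg := diagonalSum_le_edgeSum h4 g
    have hh := diagonalSum_le_edgeSum h4 h
    rw [diagonalSum] at hg hh
    rw [edgeSum_succ]
    linarith

end EnfloType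

theorem stmt18_general {V : Type*} [NormedAddCommGroup V] [NormedSpace ℝ V] (S : ℝ)
    (hsmooth : ∀ v w : V, ‖(1/2 : ℝ) • (v + w)‖ ^ 2 ≥
      (1/2) * ‖v‖ ^ 2 + (1/2) * ‖w‖ ^ 2 - S ^ 2 / 4 * ‖v - w‖ ^ 2)
    (N : ℕ) (v : (Fin N → Bool) → V) :
    ∑ ε : Fin N → Bool, ‖v ε - v (fun i => !(ε i))‖ ^ 2 ≤
      S ^ 2 * ∑ ε : Fin N → Bool, ∑ ε' : Fin N → Bool,
        if Adjacent ε ε' then ‖v ε - v ε'‖ ^ 2 else 0 := by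
  simpa only [diagonalSum, edgeSum, dist_eq_norm] using
    diagonalSum_le_edgeSum
      (dist_sq_add_dist_sq_le_of_norm_add_sq_add_norm_sub_sq_le
        (norm_add_sq_add_norm_sub_sq_le hsmooth)) v

/-- A 2-uniformly smooth normed space with constant `S` has Enflo type 2 with constant `S`. -/
theorem stmt18 {V : Type*} [NormedAddCommGroup V] [NormedSpace ℝ V] (S : ℝ) (hS : 1 ≤ S)
    (hsmooth : ∀ v w : V, ‖(1/2 : ℝ) • (v + w)‖ ^ 2 ≥
      (1/2) * ‖v‖ ^ 2 + (1/2) * ‖w‖ ^ 2 - S ^ 2 / 4 * ‖v - w‖ ^ 2)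
    (N : ℕ) (v : (Fin N → Bool) → V) :
    ∑ ε : Fin N → Bool, ‖v ε - v (fun i => !(ε i))‖ ^ 2 ≤
      S ^ 2 * ∑ ε : Fin N → Bool, ∑ ε' : Fin N → Bool,
        if Adjacent ε ε' then ‖v ε - v ε'‖ ^ 2 else 0 :=
  stmt18_general S hsmooth N v
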